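/- arXiv:2602.13839 — 4 statements merged into one kernel-verified Lean document; each statement's English description precedes it below -/
import Mathlib

section
/- Let x : Z/nZ → Z/2Z and i ∈ Z/nZ. If at least two of the three sites i-1, i, i+1 are deterministic for x, then for any configuration y satisfying y_j = x_{j-1} ⊕ x_j at every deterministic site j, the triple (y_{i-1}, y_i, y_{i+1}) is admissible, i.e., it is neither (0,1,0) nor (1,0,1). -/
/-- Site `j` is deterministic for `x` if its outer neighbors agree. -/
def IsDet (n : ℕ) (x : ZMod n → ZMod 2) (j : ZMod n) : Prop :=
  x (j - 1) = x (j + 1)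

/-- A triple is admissible if it is neither `(0,1,0)` nor `(1,0,1)`. -/
def Admissible (a b c : ZMod 2) : Prop :=
  ¬ ((a, b, c) = ((0 : ZMod 2), (1 : ZMod 2), (0 : ZMod 2)) ∨
     (a, b, c) = ((1 : ZMod 2), (0 : ZMod 2), (1 : ZMod 2)))

/-!
The forbidden triples are exactly those with `a ≠ b`, `b ≠ c` and `a = c`. If two adjacent sites
`j - 1, j` are deterministic, then `x (j - 2) = x j` forces `y (j - 1) = y j`. If only the outer
sites `i - 1, i + 1` are deterministic, then `y (i - 1) = y (i + 1)` holds exactly when `i` is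
deterministic too, so a non-deterministic middle site makes the outer values differ.
-/

theorem admissible_iff {a b c : ZMod 2} : Admissible a b c ↔ a = b ∨ b = c ∨ a ≠ c := by
  revert a b c
  unfold Admissible
  decide

section Update

variable {n : ℕ} {x y : ZMod n → ZMod 2}

theorem update_pred_eq_of_isDet_pred (hy : ∀ j, IsDet n x j → y j = x (j - 1) + x j)
    {j : ZMod n} (hj : IsDet n x (j - 1)) : y (j - 1) = x j + x (j - 1) := by
  rw [hy _ hj, hj, sub_add_cancel]

theorem update_pred_eq_update_of_isDet (hy : ∀ j, IsDet n x j → y j = x (j - 1) + x j)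
    {j : ZMod n} (hpred : IsDet n x (j - 1)) (hj : IsDet n x j) : y (j - 1) = y j := by
  rw [update_pred_eq_of_isDet_pred hy hpred, hy _ hj, add_comm]

theorem update_pred_eq_update_succ_iff (hy : ∀ j, IsDet n x j → y j = x (j - 1) + x j)
    {i : ZMod n} (hpred : IsDet n x (i - 1)) (hsucc : IsDet n x (i + 1)) :
    y (i - 1) = y (i + 1) ↔ IsDet n x i := by
  rw [update_pred_eq_of_isDet_pred hy hpred, hy _ hsucc, add_sub_cancel_right,
    add_left_cancel_iff, IsDet]

end Update

theorem det_no_forbidden_general (n : ℕ) (x y : ZMod n → ZMod 2) (i : ZMod n)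
    (htwo : (IsDet n x (i - 1) ∧ IsDet n x i) ∨
            (IsDet n x i ∧ IsDet n x (i + 1)) ∨
            (IsDet n x (i - 1) ∧ IsDet n x (i + 1)))
    (hy : ∀ j : ZMod n, IsDet n x j → y j = x (j - 1) + x j) :
    Admissible (y (i - 1)) (y i) (y (i + 1)) := by
  rw [admissible_iff]
  rcases htwo with ⟨hpred, hi⟩ | ⟨hi, hsucc⟩ | ⟨hpred, hsucc⟩
  · exact Or.inl (update_pred_eq_update_of_isDet hy hpred hi)
  · refine Or.inr (Or.inl ?_)
    simpa using update_pred_eq_update_of_isDet hy (j := i + 1) (by simpa using hi) hsucc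
  · by_cases hi : IsDet n x i
    · exact Or.inl (update_pred_eq_update_of_isDet hy hpred hi)
    · exact Or.inr (Or.inr (mt (update_pred_eq_update_succ_iff hy hpred hsucc).mp hi))

/-- Lemma 1: if at least two of the sites `i-1, i, i+1` are deterministic for `x`,
then the updated triple `(y (i-1), y i, y (i+1))` is admissible. -/
theorem det_no_forbidden (n : ℕ) (hn : 5 ≤ n) (x y : ZMod n → ZMod 2) (i : ZMod n)
    (htwo : (IsDet n x (i - 1) ∧ IsDet n x i) ∨
            (IsDet n x i ∧ IsDet n x (i + 1)) ∨
            (IsDet n x (i - 1) ∧ IsDet n x (i + 1)))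
    (hy : ∀ j : ZMod n, IsDet n x j → y j = x (j - 1) + x j) :
    Admissible (y (i - 1)) (y i) (y (i + 1)) :=
  det_no_forbidden_general n x y i htwo hy
end

section
/- Let x : Z/nZ → Z/2Z, n ≥ 5. There exists a choice of values y_1, ..., y_{n-2} ∈ Z/2Z with y_j = x_{j-1} ⊕ x_j for every deterministic site j ∈ {1,...,n-2}, such that for every i ∈ {2,...,n-3} the triple (y_{i-1}, y_i, y_{i+1}) is admissible (not equal to (0,1,0) or (1,0,1)). -/
theorem admissible_of_eq_or_eq {a b c : ZMod 2} (h : a = b ∨ b = c) : Admissible a b c := by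
  revert a b c; unfold Admissible; decide

section SequentialChoice

variable {G : Type*} [AddCommMonoid G] [DecidableEq G] (u : ℕ → G)

/-- The sequential choice on a line: site `j + 1` is deterministic when `u j = u (j + 2)`. -/
def sequentialChoice : ℕ → G
  | 0 => 0
  | j + 1 => if u j = u (j + 2) then u j + u (j + 1) else sequentialChoice j

variable {u}

theorem sequentialChoice_succ_of_eq {j : ℕ} (h : u j = u (j + 2)) :
    sequentialChoice u (j + 1) = u j + u (j + 1) :=
  if_pos h

theorem sequentialChoice_succ_of_ne {j : ℕ} (h : u j ≠ u (j + 2)) :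
    sequentialChoice u (j + 1) = sequentialChoice u j :=
  if_neg h

theorem sequentialChoice_succ_succ_of_eq {j : ℕ} (h : u j = u (j + 2)) :
    sequentialChoice u (j + 2) = sequentialChoice u (j + 1) := by
  by_cases h' : u (j + 1) = u (j + 3)
  · rw [sequentialChoice_succ_of_eq h', sequentialChoice_succ_of_eq h, ← h, add_comm]
  · exact sequentialChoice_succ_of_ne h'

theorem sequentialChoice_eq_or_eq (j : ℕ) :
    sequentialChoice u j = sequentialChoice u (j + 1) ∨
      sequentialChoice u (j + 1) = sequentialChoice u (j + 2) := by
  by_cases h : u j = u (j + 2)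
  · exact .inr (sequentialChoice_succ_succ_of_eq h).symm
  · exact .inl (sequentialChoice_succ_of_ne h).symm

end SequentialChoice

theorem interval_admissible_general (n : ℕ) (x : ZMod n → ZMod 2) :
    ∃ y : ZMod n → ZMod 2,
      (∀ j : ℕ, 1 ≤ j → j ≤ n - 2 → IsDet n x (j : ZMod n) →
        y (j : ZMod n) = x ((j : ZMod n) - 1) + x (j : ZMod n)) ∧
      (∀ i : ℕ, 2 ≤ i → i ≤ n - 3 →
        Admissible (y ((i : ZMod n) - 1)) (y (i : ZMod n)) (y ((i : ZMod n) + 1))) := by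
  set u : ℕ → ZMod 2 := fun k => x k
  have choice_natCast {k : ℕ} (hk : k < n) :
      sequentialChoice u (k : ZMod n).val = sequentialChoice u k := by
    rw [ZMod.val_cast_of_lt hk]
  refine ⟨fun z => sequentialChoice u z.val, ?_, ?_⟩
  · intro j hj hjn hdet
    obtain ⟨k, rfl⟩ := Nat.exists_eq_add_of_le' hj
    have hdet' : u k = u (k + 2) := by simpa [u, IsDet, add_assoc, one_add_one_eq_two] using hdet
    have hpred : ((k + 1 : ℕ) : ZMod n) - 1 = k := by push_cast; ring
    show sequentialChoice u ((k + 1 : ℕ) : ZMod n).val = _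
    rw [choice_natCast (by omega), hpred]
    exact sequentialChoice_succ_of_eq hdet'
  · intro i hi hin
    obtain ⟨k, rfl⟩ := Nat.exists_eq_add_of_le' hi
    have hpred : ((k + 2 : ℕ) : ZMod n) - 1 = ((k + 1 : ℕ) : ZMod n) := by push_cast; ring
    have hsucc : ((k + 2 : ℕ) : ZMod n) + 1 = ((k + 3 : ℕ) : ZMod n) := by push_cast; ring
    show Admissible (sequentialChoice u _) (sequentialChoice u _) (sequentialChoice u _)
    rw [hpred, hsucc, choice_natCast (by omega), choice_natCast (by omega),
      choice_natCast (by omega)]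
    exact admissible_of_eq_or_eq (sequentialChoice_eq_or_eq (k + 1))

/-- Lemma 2: there is a choice of values `y 1, …, y (n-2)` respecting the
deterministic updates on `{1,…,n-2}` such that every triple centered in
`{2,…,n-3}` is admissible. -/
theorem interval_admissible (n : ℕ) (hn : 5 ≤ n) (x : ZMod n → ZMod 2) :
    ∃ y : ZMod n → ZMod 2,
      (∀ j : ℕ, 1 ≤ j → j ≤ n - 2 → IsDet n x (j : ZMod n) →
        y (j : ZMod n) = x ((j : ZMod n) - 1) + x (j : ZMod n)) ∧
      (∀ i : ℕ, 2 ≤ i → i ≤ n - 3 →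
        Admissible (y ((i : ZMod n) - 1)) (y (i : ZMod n)) (y ((i : ZMod n) + 1))) :=
  interval_admissible_general n x
end

section
/- Consider the Markov chain on configurations X_n = (Z/2Z)^(Z/nZ), n ≥ 5, given by the λ=1/2 diploid PCA: at each step, independently at each site i, the new value is x_{i-1} ⊕ x_i if x_{i-1} = x_{i+1}, and a fair coin flip otherwise. Then for every initial configuration x, the probability that the chain is at the all-zero configuration after 4 steps is strictly positive. -/
/-! One step from any `x` can reach a configuration `a` in which every site agrees with one of
its neighbours: forced sites take their prescribed value, and each free site copies the value of
the nearest forced site on its left (if no site is forced, take `a = 0`). From such an `a`, a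
forced site `i` has `a (i - 1) = a i = a (i + 1)`, so its update is `0`, and free sites may be
set to `0` as well. The all-zero configuration is a fixed point, hence is reached in two steps
and kept. -/

open Finset

/-- One-site update probability of the λ = 1/2 diploid PCA of ECA 60 and 102. -/
noncomputable def pLoc (n : ℕ) (x : ZMod n → ZMod 2) (i : ZMod n) (b : ZMod 2) : ℝ :=
  if x (i - 1) = x (i + 1) then (if b = x (i - 1) + x i then 1 else 0) else 1 / 2

/-- Transition probability of the PCA: product of one-site probabilities. -/
noncomputable def ptrans (n : ℕ) [NeZero n] (x y : ZMod n → ZMod 2) : ℝ :=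
  ∏ i : ZMod n, pLoc n x i (y i)

/-- Four-step transition probability. -/
noncomputable def ptrans4 (n : ℕ) [NeZero n] (x y : ZMod n → ZMod 2) : ℝ :=
  ∑ a : ZMod n → ZMod 2, ∑ b : ZMod n → ZMod 2, ∑ c : ZMod n → ZMod 2,
    ptrans n x a * ptrans n a b * ptrans n b c * ptrans n c y

theorem ZMod.exists_agree_on_and_copy_left_off {n : ℕ} [NeZero n] {α : Type*}
    {F : ZMod n → Prop} (v : ZMod n → α) (hF : ∃ j, F j) :
    ∃ s : ZMod n → α, (∀ i, F i → s i = v i) ∧ ∀ i, ¬F i → s i = s (i - 1) := by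
  classical
  obtain ⟨j, hj⟩ := hF
  have hEx : ∀ i : ZMod n, ∃ k : ℕ, F (i - k) := fun i =>
    ⟨(i - j).val, by rwa [ZMod.natCast_zmod_val, sub_sub_cancel]⟩
  -- `d i` is the distance from `i` to the nearest site of `F` on its left.
  set d : ZMod n → ℕ := fun i => Nat.find (hEx i)
  have hd_zero : ∀ i, F i → d i = 0 := fun i hi => (Nat.find_eq_zero _).2 (by simpa using hi)
  have hd_succ : ∀ i, ¬F i → d i = d (i - 1) + 1 := fun i hi => by
    have hshift : ∀ k : ℕ, i - 1 - k = i - (k + 1 : ℕ) := fun k => by push_cast; ring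
    have hEx' : ∃ k : ℕ, F (i - (k + 1 : ℕ)) := by simpa only [hshift] using hEx (i - 1)
    calc d i = Nat.find hEx' + 1 := Nat.find_comp_succ (hEx i) hEx' (by simpa using hi)
      _ = d (i - 1) + 1 := congrArg (· + 1) (Nat.find_congr' fun {k} => by rw [hshift k])
  refine ⟨fun i => v (i - d i), fun i hi => by simp [hd_zero i hi], fun i hi => ?_⟩
  simp only [hd_succ i hi]
  congr 1
  push_cast
  ring

def NoIsolatedSites {n : ℕ} (a : ZMod n → ZMod 2) : Prop :=
  ∀ i, a (i - 1) = a i ∨ a i = a (i + 1)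

lemma noIsolatedSites_const (n : ℕ) (z : ZMod 2) : NoIsolatedSites (fun _ : ZMod n => z) :=
  fun _ => Or.inl rfl

lemma pLoc_nonneg (n : ℕ) (x : ZMod n → ZMod 2) (i : ZMod n) (b : ZMod 2) :
    0 ≤ pLoc n x i b := by
  unfold pLoc
  split_ifs <;> norm_num

lemma ptrans_nonneg (n : ℕ) [NeZero n] (x y : ZMod n → ZMod 2) : 0 ≤ ptrans n x y :=
  prod_nonneg fun i _ => pLoc_nonneg n x i (y i)

lemma ptrans_pos {n : ℕ} [NeZero n] {x y : ZMod n → ZMod 2}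
    (h : ∀ i, x (i - 1) = x (i + 1) → y i = x (i - 1) + x i) : 0 < ptrans n x y :=
  prod_pos fun i _ => by
    unfold pLoc
    split_ifs with hx hy
    exacts [one_pos, absurd (h i hx) hy, one_half_pos]

lemma mul_ptrans_le_ptrans4 (n : ℕ) [NeZero n] (x a b c y : ZMod n → ZMod 2) :
    ptrans n x a * ptrans n a b * ptrans n b c * ptrans n c y ≤ ptrans4 n x y := by
  have h := ptrans_nonneg n
  have hterm : ∀ a b c, 0 ≤ ptrans n x a * ptrans n a b * ptrans n b c * ptrans n c y :=
    fun a b c => mul_nonneg (mul_nonneg (mul_nonneg (h _ _) (h _ _)) (h _ _)) (h _ _)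
  calc _ ≤ ∑ c', ptrans n x a * ptrans n a b * ptrans n b c' * ptrans n c' y :=
        single_le_sum (fun c' _ => hterm a b c') (mem_univ c)
    _ ≤ ∑ b', ∑ c', ptrans n x a * ptrans n a b' * ptrans n b' c' * ptrans n c' y :=
        single_le_sum (fun b' _ => sum_nonneg fun c' _ => hterm a b' c') (mem_univ b)
    _ ≤ ptrans4 n x y :=
        single_le_sum (fun a' _ => sum_nonneg fun b' _ => sum_nonneg fun c' _ => hterm a' b' c')
          (mem_univ a)

lemma ptrans_zero_pos_of_noIsolatedSites {n : ℕ} [NeZero n] {a : ZMod n → ZMod 2}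
    (ha : NoIsolatedSites a) : 0 < ptrans n a (fun _ => 0) := by
  have hself : ∀ z : ZMod 2, z + z = 0 := by decide
  refine ptrans_pos fun i hforced => ?_
  rcases ha i with h | h
  · rw [h, hself]
  · rw [hforced, ← h, hself]

-- With `u i = x i + x (i + 1)`, site `i` is forced iff `u (i - 1) = u i`, and its value is then `u i`.
lemma exists_ptrans_pos_noIsolatedSites (n : ℕ) [NeZero n] (x : ZMod n → ZMod 2) :
    ∃ a, 0 < ptrans n x a ∧ NoIsolatedSites a := by
  set u : ZMod n → ZMod 2 := fun i => x i + x (i + 1)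
  have hu : ∀ i, u (i - 1) = x (i - 1) + x i := fun i => by simp [u]
  have hforced : ∀ i, x (i - 1) = x (i + 1) → u (i - 1) = u i := fun i h => by
    rw [hu, h, add_comm]
  by_cases hF : ∃ j, u (j - 1) = u j
  · obtain ⟨s, hs_on, hs_off⟩ := ZMod.exists_agree_on_and_copy_left_off u hF
    refine ⟨s, ptrans_pos fun i hx => ?_, fun i => ?_⟩
    · rw [hs_on i (hforced i hx), ← hforced i hx, hu]
    · by_cases hnext : u i = u (i + 1)
      · by_cases hi : u (i - 1) = u i
        · exact Or.inr (by rw [hs_on i hi, hs_on (i + 1) (by simpa using hnext), hnext])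
        · exact Or.inl (hs_off i hi).symm
      · exact Or.inr (by simpa using (hs_off (i + 1) (by simpa using hnext)).symm)
  · exact ⟨fun _ => 0, ptrans_pos fun i hx => absurd ⟨i, hforced i hx⟩ hF,
      noIsolatedSites_const n 0⟩

theorem four_step_reachability_general (n : ℕ) [NeZero n]
    (x : ZMod n → ZMod 2) :
    0 < ptrans4 n x (fun _ => 0) := by
  obtain ⟨a, hxa, ha⟩ := exists_ptrans_pos_noIsolatedSites n x
  have hzero := ptrans_zero_pos_of_noIsolatedSites (noIsolatedSites_const n 0)
  have hpath := mul_pos (mul_pos (mul_pos hxa (ptrans_zero_pos_of_noIsolatedSites ha)) hzero) hzero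
  exact hpath.trans_le (mul_ptrans_le_ptrans4 n x a _ _ _)

/-- Theorem 1: from any initial configuration, the all-zero configuration is
reached in four steps with strictly positive probability. -/
theorem four_step_reachability (n : ℕ) [NeZero n] (hn : 5 ≤ n)
    (x : ZMod n → ZMod 2) :
    0 < ptrans4 n x (fun _ => 0) :=
  four_step_reachability_general n x
end

section
/- For the λ=1/2 diploid PCA, if x : Z/nZ → Z/2Z satisfies x_i = 0 for all i ∈ {2,...,n-3} (n ≥ 8), then there exists a configuration y with y_j = x_{j-1} ⊕ x_j at every deterministic site j, such that every triple of y centered at a site in {n-2, n-1, 0, 1} is admissible (not (0,1,0) and not (1,0,1)); moreover y_i = 0 for all i ∈ {3, ..., n-4}. -/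
instance (a b c : ZMod 2) : Decidable (Admissible a b c) :=
  inferInstanceAs (Decidable (¬ _))

open Set

/- `a, b, c, d` are the values of `X` at `-2, …, 1` and `p, …, u` those of `Y` at `-3, …, 2`;
the six implications are the determinism constraints there, given `X = 0` at `-4, -3, 2, 3`. -/
set_option synthInstance.maxSize 1000 in
theorem exists_admissible_window_update (a b c d : ZMod 2) :
    ∃ p q r s t u : ZMod 2,
      (0 = a → p = 0) ∧ (0 = b → q = a) ∧ (a = c → r = a + b) ∧
      (b = d → s = b + c) ∧ (c = 0 → t = c + d) ∧ (d = 0 → u = d) ∧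
      Admissible p q r ∧ Admissible q r s ∧ Admissible r s t ∧ Admissible s t u := by
  revert a b c d
  decide

theorem exists_admissible_update_of_support (X : ℤ → ZMod 2)
    (hX : ∀ m ∉ Icc (-2 : ℤ) 1, X m = 0) :
    ∃ Y : ℤ → ZMod 2, (∀ m ∉ Icc (-3 : ℤ) 2, Y m = 0) ∧
      (∀ k, X (k - 1) = X (k + 1) → Y k = X (k - 1) + X k) ∧
      ∀ k ∈ Icc (-2 : ℤ) 1, Admissible (Y (k - 1)) (Y k) (Y (k + 1)) := by
  obtain ⟨p, q, r, s, t, u, hp, hq, hr, hs, ht, hu, hpqr, hqrs, hrst, hstu⟩ :=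
    exists_admissible_window_update (X (-2)) (X (-1)) (X 0) (X 1)
  have hX' : ∀ m : ℤ, m ≤ -3 ∨ 2 ≤ m → X m = 0 := fun m hm => hX m (by rw [mem_Icc]; omega)
  let Y : ℤ → ZMod 2 := fun m =>
    if m = -3 then p else if m = -2 then q else if m = -1 then r else
    if m = 0 then s else if m = 1 then t else if m = 2 then u else 0
  have hY : ∀ m ∉ Icc (-3 : ℤ) 2, Y m = 0 := fun m hm => by
    rw [mem_Icc] at hm
    simp only [Y]
    split_ifs <;> first | rfl | omega
  refine ⟨Y, hY, fun k hk => ?_, fun k ⟨hlo, hhi⟩ => ?_⟩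
  · by_cases hwin : k ∈ Icc (-3 : ℤ) 2
    · obtain ⟨hlo, hhi⟩ := hwin
      have hXm4 := hX' (-4) (by norm_num)
      have hXm3 := hX' (-3) (by norm_num)
      have hX2 := hX' 2 (by norm_num)
      have hX3 := hX' 3 (by norm_num)
      interval_cases k <;> norm_num [Y, hXm4, hXm3, hX2, hX3] at hk ⊢
      exacts [hp hk, hq hk, hr hk, hs hk, ht hk, hu hk]
    · rw [mem_Icc] at hwin
      rw [hY k (by rwa [mem_Icc]), hX' k (by omega), hX' (k - 1) (by omega), add_zero]
  · interval_cases k <;> simpa [Y]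

def reprFrom {n : ℕ} (a : ℤ) (j : ZMod n) : ℤ := (j - a).val + a

section reprFrom

variable {n : ℕ} [NeZero n]

theorem intCast_reprFrom (a : ℤ) (j : ZMod n) : ((reprFrom a j : ℤ) : ZMod n) = j := by
  simp [reprFrom]

theorem reprFrom_mem_Ico (a : ℤ) (j : ZMod n) : reprFrom a j ∈ Ico a (a + n) := by
  have := ZMod.val_lt (j - (a : ZMod n))
  simp only [reprFrom, mem_Ico]
  omega

theorem reprFrom_intCast {a k : ℤ} (hk : k ∈ Ico a (a + n)) : reprFrom a (k : ZMod n) = k := by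
  obtain ⟨h₁, h₂⟩ := hk
  rw [reprFrom, ← Int.cast_sub, ZMod.val_intCast, Int.emod_eq_of_lt (by omega) (by omega)]
  ring

theorem lift_update_eq_of_isDet (x : ZMod n → ZMod 2) (X Y : ℤ → ZMod 2) (a : ℤ)
    (hX : ∀ m ∈ Icc (a - 1) (a + n), X m = x m)
    (hY : ∀ k, X (k - 1) = X (k + 1) → Y k = X (k - 1) + X k) (j : ZMod n) (hj : IsDet n x j) :
    Y (reprFrom a j) = x (j - 1) + x j := by
  obtain ⟨k, ⟨h₁, h₂⟩, rfl⟩ : ∃ k ∈ Ico a (a + n), (k : ZMod n) = j :=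
    ⟨_, reprFrom_mem_Ico a j, intCast_reprFrom a j⟩
  have hXpred := hX (k - 1) ⟨by omega, by omega⟩
  have hXsucc := hX (k + 1) ⟨by omega, by omega⟩
  push_cast at hXpred hXsucc
  rw [IsDet, ← hXpred, ← hXsucc] at hj
  rw [reprFrom_intCast ⟨h₁, h₂⟩, ← hXpred, ← hX k ⟨by omega, by omega⟩]
  exact hY k hj

end reprFrom

theorem eq_zero_of_bulk {n : ℕ} (hn : 6 ≤ n) (x : ZMod n → ZMod 2)
    (hbulk : ∀ i : ℕ, 2 ≤ i → i ≤ n - 3 → x (i : ZMod n) = 0) {m : ℤ}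
    (hm : m ∈ Icc (-4 : ℤ) (n - 3)) (hm' : m ∉ Icc (-2 : ℤ) 1) : x m = 0 := by
  rw [mem_Icc] at hm hm'
  obtain ⟨i, hi, hi', hxi⟩ : ∃ i : ℕ, 2 ≤ i ∧ i ≤ n - 3 ∧ ((i : ℤ) : ZMod n) = m := by
    rcases le_or_gt 0 m with h | h
    · exact ⟨m.toNat, by omega, by omega, by simp [h]⟩
    · exact ⟨(m + n).toNat, by omega, by omega, by simp [show 0 ≤ m + n by omega]⟩
  rw [← hxi, Int.cast_natCast]
  exact hbulk i hi hi'

/-- Lemma 4 (boundary lemma): if `x` vanishes on the bulk `{2,…,n-3}`, there is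
an update `y` making all triples centered at `n-2, n-1, 0, 1` admissible, and
vanishing on `{3,…,n-4}`. -/
theorem boundary_lemma (n : ℕ) (hn : 8 ≤ n) (x : ZMod n → ZMod 2)
    (hbulk : ∀ i : ℕ, 2 ≤ i → i ≤ n - 3 → x (i : ZMod n) = 0) :
    ∃ y : ZMod n → ZMod 2,
      (∀ j : ZMod n, IsDet n x j → y j = x (j - 1) + x j) ∧
      (∀ i : ZMod n,
        (i = ((n - 2 : ℕ) : ZMod n) ∨ i = ((n - 1 : ℕ) : ZMod n) ∨ i = 0 ∨ i = 1) →
        Admissible (y (i - 1)) (y i) (y (i + 1))) ∧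
      (∀ i : ℕ, 3 ≤ i → i ≤ n - 4 → y (i : ZMod n) = 0) := by
  have : NeZero n := ⟨by omega⟩
  let X : ℤ → ZMod 2 := (Icc (-2) 1).indicator fun m => x m
  have hX : ∀ m ∈ Icc (-4 : ℤ) (n - 3), X m = x m := fun m hm => by
    by_cases hm' : m ∈ Icc (-2 : ℤ) 1
    · exact indicator_of_mem hm' _
    · exact (indicator_of_notMem hm' _).trans (eq_zero_of_bulk (by omega) x hbulk hm hm').symm
  obtain ⟨Y, hYsupp, hYdet, hYadm⟩ :=
    exists_admissible_update_of_support X fun m hm => indicator_of_notMem hm _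
  have hy : ∀ k ∈ Ico (-3 : ℤ) (n - 3), Y (reprFrom (-3) (k : ZMod n)) = Y k := fun k hk => by
    rw [reprFrom_intCast (by convert hk using 2; ring)]
  refine ⟨fun j => Y (reprFrom (-3) j),
    lift_update_eq_of_isDet x X Y (-3) (fun m hm => hX m (by convert hm using 2 <;> ring)) hYdet,
    fun i hi => ?_, fun i hi₃ hi₄ => ?_⟩
  · obtain ⟨m, ⟨h₁, h₂⟩, rfl⟩ : ∃ m ∈ Icc (-2 : ℤ) 1, (m : ZMod n) = i := by
      rcases hi with rfl | rfl | rfl | rfl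
      · exact ⟨-2, by norm_num, by simp [Nat.cast_sub (by omega : 2 ≤ n)]⟩
      · exact ⟨-1, by norm_num, by simp [Nat.cast_sub (by omega : 1 ≤ n)]⟩
      · exact ⟨0, by norm_num, by simp⟩
      · exact ⟨1, by norm_num, by simp⟩
    dsimp only
    rw [← Int.cast_one, ← Int.cast_sub, ← Int.cast_add, hy (m - 1) ⟨by omega, by omega⟩,
      hy m ⟨by omega, by omega⟩, hy (m + 1) ⟨by omega, by omega⟩]
    exact hYadm m ⟨h₁, h₂⟩
  · dsimp only
    rw [← Int.cast_natCast, hy i ⟨by omega, by omega⟩, hYsupp i (by rw [mem_Icc]; omega)]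
end
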